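/- For every integer n ≥ 2 and every ε ∈ (0, 1/2), the bound P^upper(n; ε) = (1/2)·[1 − erf((n/2 − n·ε)/√(2·n·ε·(1−ε)))] satisfies P^upper(n; ε) ≤ P^upper(2; ε) < ε. -/

import Mathlib

/-- The error function `erf z = (2/√π) · ∫_0^z exp(-t²) dt`. -/
noncomputable def erf (z : ℝ) : ℝ :=
  (2 / Real.sqrt Real.pi) * ∫ t in (0:ℝ)..z, Real.exp (-t ^ 2)

/-- `P^upper(n; ε) = (1/2)·[1 - erf((n/2 - n·ε)/√(2·n·ε·(1-ε)))]`. -/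
noncomputable def Pupper (n : ℕ) (ε : ℝ) : ℝ :=
  (1 / 2) * (1 - erf (((n : ℝ) / 2 - (n : ℝ) * ε) / Real.sqrt (2 * (n : ℝ) * ε * (1 - ε))))

/-!
Since `Pupper n ε = (1 - erf (√n * κ)) / 2` with `κ ≥ 0`, it decreases in `n`. For `n = 2` the
argument of `erf` is `x = y / √(1 - y ^ 2)` with `y = 1 - 2ε`, so `Pupper 2 ε < ε` amounts to
`x / √(1 + x ^ 2) < erf x` for `x > 0`. For `x ≤ 1` this follows from `exp (-t ^ 2) ≥ 1 - t ^ 2`,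
for `x ≥ 1` from the Gaussian tail bound `∫ t in Ioi x, exp (-t ^ 2) ≤ exp (-x ^ 2) / (2 * x)`.
-/

open Real Set MeasureTheory

lemma continuous_exp_neg_sq : Continuous fun t : ℝ => exp (-t ^ 2) := by fun_prop

lemma integrable_exp_neg_sq : Integrable fun t : ℝ => exp (-t ^ 2) := by
  simpa using integrable_exp_neg_mul_sq one_pos

lemma erf_monotone : Monotone erf := by
  intro a b hab
  have hsplit := intervalIntegral.integral_interval_sub_left (μ := volume)
    (continuous_exp_neg_sq.intervalIntegrable 0 b) (continuous_exp_neg_sq.intervalIntegrable 0 a)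
  have hnonneg : 0 ≤ ∫ t in a..b, exp (-t ^ 2) :=
    intervalIntegral.integral_nonneg hab fun t _ => (exp_pos _).le
  unfold erf
  gcongr
  linarith

lemma erf_eq_one_sub_integral_Ioi (x : ℝ) :
    erf x = 1 - 2 / √π * ∫ t in Ioi x, exp (-t ^ 2) := by
  have hsplit := intervalIntegral.integral_interval_add_Ioi (f := fun t : ℝ => exp (-t ^ 2))
    (μ := volume) (a := 0) (b := x) integrable_exp_neg_sq.integrableOn
    integrable_exp_neg_sq.integrableOn
  have hhalf : ∫ t in Ioi (0 : ℝ), exp (-t ^ 2) = √π / 2 := by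
    simpa using integral_gaussian_Ioi 1
  have hπ : √π ≠ 0 := (sqrt_pos.2 pi_pos).ne'
  unfold erf
  field_simp
  linarith

lemma integrable_mul_exp_neg_sq : Integrable fun t : ℝ => t * exp (-t ^ 2) := by
  simpa using integrable_mul_exp_neg_mul_sq one_pos

lemma integral_Ioi_mul_exp_neg_sq (x : ℝ) :
    ∫ t in Ioi x, t * exp (-t ^ 2) = exp (-x ^ 2) / 2 := by
  have hderiv : ∀ t ∈ Ici x, HasDerivAt (fun y : ℝ => -exp (-y ^ 2) / 2) (t * exp (-t ^ 2)) t := by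
    intro t _
    have hsq : HasDerivAt (fun y : ℝ => -y ^ 2) (-(2 * t)) t := by
      simpa using (hasDerivAt_pow 2 t).const_mul (-1 : ℝ)
    exact (hsq.exp.neg.div_const 2).congr_deriv (by ring)
  have hlim : Filter.Tendsto (fun y : ℝ => -exp (-y ^ 2) / 2) Filter.atTop (nhds 0) := by
    have h := (tendsto_exp_atBot.comp
      (Filter.tendsto_neg_atTop_atBot.comp (Filter.tendsto_pow_atTop two_ne_zero))).neg.div_const 2
    simpa using h
  rw [integral_Ioi_of_hasDerivAt_of_tendsto' hderiv integrable_mul_exp_neg_sq.integrableOn hlim]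
  ring

lemma integral_Ioi_exp_neg_sq_le {x : ℝ} (hx : 0 < x) :
    ∫ t in Ioi x, exp (-t ^ 2) ≤ exp (-x ^ 2) / (2 * x) :=
  calc ∫ t in Ioi x, exp (-t ^ 2) ≤ ∫ t in Ioi x, t * exp (-t ^ 2) / x := by
        refine setIntegral_mono_on integrable_exp_neg_sq.integrableOn
          (integrable_mul_exp_neg_sq.integrableOn.div_const x) measurableSet_Ioi fun t ht => ?_
        rw [le_div_iff₀ hx, mul_comm]
        exact mul_le_mul_of_nonneg_right (le_of_lt ht) (exp_pos _).le
    _ = exp (-x ^ 2) / (2 * x) := by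
        rw [integral_div, integral_Ioi_mul_exp_neg_sq]
        ring

lemma integral_one_sub_sq (x : ℝ) : ∫ t in (0 : ℝ)..x, (1 - t ^ 2) = x - x ^ 3 / 3 := by
  rw [intervalIntegral.integral_sub intervalIntegrable_const
      (intervalIntegral.intervalIntegrable_pow 2),
    intervalIntegral.integral_const, integral_pow, smul_eq_mul]
  ring

lemma two_div_sqrt_pi_mul_sub_cube_le_erf {x : ℝ} (hx : 0 ≤ x) :
    2 / √π * (x - x ^ 3 / 3) ≤ erf x := by
  unfold erf
  rw [← integral_one_sub_sq]
  gcongr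
  refine intervalIntegral.integral_mono_on hx
    ((by fun_prop : Continuous fun t : ℝ => 1 - t ^ 2).intervalIntegrable 0 x)
    (continuous_exp_neg_sq.intervalIntegrable 0 x) fun t _ => ?_
  linarith [add_one_le_exp (-t ^ 2)]

lemma one_sub_exp_neg_sq_div_le_erf {x : ℝ} (hx : 0 < x) : 1 - exp (-x ^ 2) / (x * √π) ≤ erf x := by
  rw [erf_eq_one_sub_integral_Ioi]
  have hbound := integral_Ioi_exp_neg_sq_le hx
  have hπ : 0 < √π := sqrt_pos.2 pi_pos
  have : 2 / √π * ∫ t in Ioi x, exp (-t ^ 2) ≤ exp (-x ^ 2) / (x * √π) :=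
    calc 2 / √π * ∫ t in Ioi x, exp (-t ^ 2) ≤ 2 / √π * (exp (-x ^ 2) / (2 * x)) := by gcongr
      _ = exp (-x ^ 2) / (x * √π) := by field_simp
  linarith

lemma div_sqrt_one_add_sq_lt_two_div_sqrt_pi_mul_sub_cube {x : ℝ} (hx : 0 < x) (hx1 : x ≤ 1) :
    x / √(1 + x ^ 2) < 2 / √π * (x - x ^ 3 / 3) := by
  have hpos : 0 < 1 + x ^ 2 := by positivity
  have hs : 0 < √(1 + x ^ 2) := sqrt_pos.2 hpos
  have hs2 : √(1 + x ^ 2) ^ 2 = 1 + x ^ 2 := sq_sqrt hpos.le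
  have hπ : 0 < √π := sqrt_pos.2 pi_pos
  have hx2 : x ^ 2 ≤ 1 := by nlinarith
  -- `(1 - u / 3) ^ 2 * (1 + u) - 8 / 9 = (1 - u) * (1 + 4 * u - u ^ 2) / 9` with `u = x ^ 2`
  have hpoly : π < (2 * (1 - x ^ 2 / 3)) ^ 2 * (1 + x ^ 2) := by
    nlinarith [pi_lt_d2, mul_nonneg (sub_nonneg.2 hx2) (by nlinarith : 0 ≤ 1 + 4 * x ^ 2 - x ^ 4)]
  have hroot : √π < 2 * (1 - x ^ 2 / 3) * √(1 + x ^ 2) := by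
    rw [sqrt_lt' (by nlinarith), mul_pow, hs2]
    exact hpoly
  rw [div_lt_iff₀ hs, div_mul_eq_mul_div, div_mul_eq_mul_div, lt_div_iff₀ hπ]
  nlinarith [mul_lt_mul_of_pos_left hroot hx]

lemma div_sqrt_one_add_sq_lt_one_sub {x T : ℝ} (h : 2 * T * (1 + x ^ 2) < 1) :
    x / √(1 + x ^ 2) < 1 - T := by
  have hpos : 0 < 1 + x ^ 2 := by positivity
  have hs : 0 < √(1 + x ^ 2) := sqrt_pos.2 hpos
  have hs2 : √(1 + x ^ 2) ^ 2 = 1 + x ^ 2 := sq_sqrt hpos.le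
  have hT : T < 1 / 2 := by nlinarith [sq_nonneg x]
  rw [div_lt_iff₀ hs]
  refine lt_of_pow_lt_pow_left₀ 2 (by nlinarith) ?_
  rw [mul_pow, hs2]
  nlinarith [mul_nonneg (sq_nonneg T) hpos.le]

lemma two_mul_exp_neg_sq_div_mul_lt_one {x : ℝ} (hx : 1 ≤ x) :
    2 * (exp (-x ^ 2) / (x * √π)) * (1 + x ^ 2) < 1 := by
  have hx0 : 0 < x := by linarith
  have hπ : 1.7 < √π := by
    rw [lt_sqrt (by norm_num)]
    linarith [pi_gt_three]
  have hexp : 1 + x ^ 2 + (x ^ 2) ^ 2 / 2 ≤ exp (x ^ 2) := quadratic_le_exp_of_nonneg (sq_nonneg x)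
  have hgrowth : 2 * (1 + x ^ 2) < x * √π * exp (x ^ 2) := by
    have h1 : 1.7 * (1 + x ^ 2 + (x ^ 2) ^ 2 / 2) ≤ x * √π * exp (x ^ 2) := by
      have := mul_le_mul hπ.le hexp (by positivity) (by positivity)
      nlinarith [mul_le_mul_of_nonneg_right hx (by positivity : 0 ≤ √π * exp (x ^ 2))]
    nlinarith [mul_le_mul hx hx zero_le_one hx0.le]
  rw [exp_neg]
  rw [show 2 * ((exp (x ^ 2))⁻¹ / (x * √π)) * (1 + x ^ 2)
      = 2 * (1 + x ^ 2) / (x * √π * exp (x ^ 2)) by field_simp]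
  rw [div_lt_one (by positivity)]
  exact hgrowth

lemma div_sqrt_one_add_sq_lt_erf {x : ℝ} (hx : 0 < x) : x / √(1 + x ^ 2) < erf x := by
  rcases le_total x 1 with hx1 | hx1
  · exact (div_sqrt_one_add_sq_lt_two_div_sqrt_pi_mul_sub_cube hx hx1).trans_le
      (two_div_sqrt_pi_mul_sub_cube_le_erf hx.le)
  · exact (div_sqrt_one_add_sq_lt_one_sub (two_mul_exp_neg_sq_div_mul_lt_one hx1)).trans_le
      (one_sub_exp_neg_sq_div_le_erf hx)

lemma lt_erf_div_sqrt_one_sub_sq {y : ℝ} (hy0 : 0 < y) (hy1 : y < 1) :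
    y < erf (y / √(1 - y ^ 2)) := by
  have hpos : 0 < 1 - y ^ 2 := by nlinarith
  have hs : 0 < √(1 - y ^ 2) := sqrt_pos.2 hpos
  have hs2 : √(1 - y ^ 2) ^ 2 = 1 - y ^ 2 := sq_sqrt hpos.le
  have hx := div_sqrt_one_add_sq_lt_erf (div_pos hy0 hs)
  have h1 : 1 + (y / √(1 - y ^ 2)) ^ 2 = (1 / √(1 - y ^ 2)) ^ 2 := by
    field_simp
    linarith
  rwa [h1, sqrt_sq (by positivity), div_div_div_cancel_right₀ hs.ne', div_one] at hx

lemma Pupper_eq (n : ℕ) (ε : ℝ) :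
    Pupper n ε = 1 / 2 * (1 - erf (√n * ((1 / 2 - ε) / √(2 * ε * (1 - ε))))) := by
  unfold Pupper
  rw [show (n : ℝ) / 2 - n * ε = n * (1 / 2 - ε) by ring,
    show 2 * (n : ℝ) * ε * (1 - ε) = n * (2 * ε * (1 - ε)) by ring,
    sqrt_mul n.cast_nonneg, mul_div_mul_comm, div_sqrt]

lemma Pupper_antitone {ε : ℝ} (hε : ε ≤ 1 / 2) : Antitone fun n => Pupper n ε := by
  intro m n hmn
  have hκ : 0 ≤ (1 / 2 - ε) / √(2 * ε * (1 - ε)) := div_nonneg (by linarith) (sqrt_nonneg _)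
  have := erf_monotone (mul_le_mul_of_nonneg_right (sqrt_le_sqrt (Nat.cast_le.2 hmn)) hκ)
  simp only [Pupper_eq]
  linarith

lemma Pupper_two_lt {ε : ℝ} (h0 : 0 < ε) (h1 : ε < 1 / 2) : Pupper 2 ε < ε := by
  have h := lt_erf_div_sqrt_one_sub_sq (y := 1 - 2 * ε) (by linarith) (by linarith)
  have harg : (1 - 2 * ε) / √(1 - (1 - 2 * ε) ^ 2)
      = (((2 : ℕ) : ℝ) / 2 - (2 : ℕ) * ε) / √(2 * ((2 : ℕ) : ℝ) * ε * (1 - ε)) := by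
    push_cast
    ring_nf
  unfold Pupper
  rw [← harg]
  linarith

/-- For every integer `n ≥ 2` and every `ε ∈ (0, 1/2)`,
`P^upper(n; ε) ≤ P^upper(2; ε) < ε`. -/
theorem Pupper_le_Pupper_two_lt (n : ℕ) (hn : 2 ≤ n) (ε : ℝ)
    (hε : ε ∈ Set.Ioo (0 : ℝ) (1 / 2)) :
    Pupper n ε ≤ Pupper 2 ε ∧ Pupper 2 ε < ε :=
  ⟨Pupper_antitone hε.2.le hn, Pupper_two_lt hε.1 hε.2⟩
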